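/- arXiv:1203.3257 — 4 statements merged into one kernel-verified Lean document; each statement's English description precedes it below -/
import Mathlib

section
/- Let X ⊂ √m S^{m-1} be a finite set and Pol_k(X) the space of functions on X defined recursively by: Pol_0(X) = constant functions, Pol_1(X) = span of zonal polynomials ζ_a(p) for a ∈ X and deg p ≤ 1, and Pol_k(X) = span{fg : f ∈ Pol_1(X), g ∈ Pol_{k-1}(X)} for k ≥ 2. Then for each nonnegative integer k, Pol_k(X) = span_ℝ{ζ_a(p) : a ∈ X, deg p ≤ k}. -/
open scoped InnerProductSpace Classical

noncomputable section

variable {V : Type*} [NormedAddCommGroup V] [InnerProductSpace ℝ V]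

/-- `X` lies on the sphere of squared radius `m` (radius `√m`). -/
def onSphere (m : ℝ) (X : Finset V) : Prop := ∀ x ∈ X, ⟪x, x⟫_ℝ = m

/-- The normalized Gram matrix `G` of `X`. -/
def gram (X : Finset V) : Matrix X X ℝ :=
  Matrix.of fun x y => (1 / (X.card : ℝ)) * ⟪(x : V), (y : V)⟫_ℝ

/-- The two conditions characterizing spherical 2-designs: `GJ = 0` and `G² = G`. -/
def IsTwoDesign (X : Finset V) : Prop :=
  (∀ x ∈ X, ∑ y ∈ X, ⟪x, y⟫_ℝ = 0) ∧
  (∀ x ∈ X, ∀ y ∈ X, (1 / (X.card : ℝ)) * ∑ z ∈ X, ⟪x, z⟫_ℝ * ⟪z, y⟫_ℝ = ⟪x, y⟫_ℝ)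

/-- `Pol_k(X)`: span of the zonal polynomials of degree at most `k`. -/
def Pol (X : Finset V) (k : ℕ) : Submodule ℝ (X → ℝ) :=
  Submodule.span ℝ {f | ∃ a ∈ X, ∃ p : Polynomial ℝ,
    p.natDegree ≤ k ∧ f = fun x => p.eval ⟪a, x.1⟫_ℝ}

/-- The inner product `(f,g) = (1/n) ∑ f(x) g(x)` on `C(X)`. -/
def inn (X : Finset V) (f g : X → ℝ) : ℝ := (1 / (X.card : ℝ)) * ∑ x, f x * g x

def innL (X : Finset V) (f : X → ℝ) : (X → ℝ) →ₗ[ℝ] ℝ where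
  toFun g := inn X f g
  map_add' g h := by
    simp only [inn, Pi.add_apply, mul_add, Finset.sum_add_distrib]
  map_smul' c g := by
    simp only [inn, Pi.smul_apply, smul_eq_mul, RingHom.id_apply]
    rw [Finset.sum_congr rfl (fun x _ => by ring : ∀ x ∈ Finset.univ, f x * (c * g x) = c * (f x * g x)),
      ← Finset.mul_sum]
    ring

/-- The orthogonal complement of `W` with respect to `inn`. -/
def perp (X : Finset V) (W : Submodule ℝ (X → ℝ)) : Submodule ℝ (X → ℝ) :=
  ⨅ f ∈ W, LinearMap.ker (innL X f)

/-- The harmonic spaces `Harm_k(X)`. -/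
def Harm (X : Finset V) : ℕ → Submodule ℝ (X → ℝ)
  | 0 => Pol X 0
  | (k+1) => Pol X (k+1) ⊓ perp X (Pol X k)

/-- `F` is the matrix of the orthogonal projection of `C(X)` onto `W`
(with respect to the inner product `inn`). -/
def IsProjOnto (X : Finset V) (W : Submodule ℝ (X → ℝ)) (F : Matrix X X ℝ) : Prop :=
  (∀ f, F.mulVec f ∈ W) ∧ (∀ f ∈ W, F.mulVec f = f) ∧ (∀ f ∈ perp X W, F.mulVec f = 0)

/-- The degree `S` of `X`: the least `i` with `Pol_i(X) = C(X)`. -/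
def degS (X : Finset V) : ℕ := sInf {i | Pol X i = ⊤}

/-- `A(X)`, the set of inner products between distinct points of `X`. -/
def Aset (X : Finset V) : Finset ℝ :=
  ((X ×ˢ X).filter fun p => p.1 ≠ p.2).image fun p => ⟪p.1, p.2⟫_ℝ

/-- `A'(X) = A(X) ∪ {m}`. -/
def Aset' (m : ℝ) (X : Finset V) : Finset ℝ := insert m (Aset X)

/-- `κ_α`, the number of ordered pairs of points of `X` with inner product `α`. -/
def kappa (X : Finset V) (α : ℝ) : ℕ := ((X ×ˢ X).filter fun p => ⟪p.1, p.2⟫_ℝ = α).card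

/-- The inner product `⟨p,q⟩ = (1/n²) ∑_{α ∈ A'(X)} κ_α p(α) q(α)` on polynomials. -/
def pInn (m : ℝ) (X : Finset V) (p q : Polynomial ℝ) : ℝ :=
  (1 / (X.card : ℝ) ^ 2) * ∑ α ∈ Aset' m X, (kappa X α : ℝ) * (p.eval α * q.eval α)

/-- `q` is the family of predegree polynomials of `X`. -/
def IsPredegree (m : ℝ) (X : Finset V) (s : ℕ) (q : ℕ → Polynomial ℝ) : Prop :=
  (∀ k ≤ s, (q k).natDegree = k ∧ q k ≠ 0) ∧
  (∀ k ≤ s, ∀ h ≤ s, pInn m X (q k) (q h) = if k = h then (q k).eval m else 0)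

/-- The relation matrix `A_α` of `X`. -/
def relMat (X : Finset V) (α : ℝ) : Matrix X X ℝ :=
  Matrix.of fun x y => if ⟪(x : V), (y : V)⟫_ℝ = α then 1 else 0

/-- `X` carries the structure of a `Q`-polynomial association scheme with respect to
the idempotents `F_0, …, F_s` (whose relations are given by the inner products). -/
def CarriesQPolyScheme (m : ℝ) (X : Finset V) (s : ℕ) (F : ℕ → Matrix X X ℝ) : Prop :=
  (∀ α ∈ Aset' m X, ∀ β ∈ Aset' m X, relMat X α * relMat X β ∈
      Submodule.span ℝ (relMat X '' (Aset' m X : Set ℝ))) ∧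
  (∀ i ≤ s, F i ∈ Submodule.span ℝ (relMat X '' (Aset' m X : Set ℝ))) ∧
  (∀ i ≤ s, ∀ j ≤ s, F i * F j = if i = j then F i else 0) ∧
  (∑ i ∈ Finset.range (s + 1), F i = 1) ∧
  (F 0 = Matrix.of fun _ _ => 1 / (X.card : ℝ)) ∧
  (∀ i ≤ s, ∃ v : Polynomial ℝ, v.natDegree = i ∧
      F i = Matrix.of fun x y => (1 / (X.card : ℝ)) * v.eval ((X.card : ℝ) * F 1 x y))


/-- `Pol_1(X)`: span of the zonal polynomials of degree at most `1`. -/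
def Pol1 (X : Finset V) : Submodule ℝ (X → ℝ) :=
  Submodule.span ℝ {f | ∃ a ∈ X, ∃ p : Polynomial ℝ,
    p.natDegree ≤ 1 ∧ f = fun x => p.eval ⟪a, x.1⟫_ℝ}

/-- The recursive definition of `Pol_k(X)`: `Pol_0` consists of the constant functions,
`Pol_1` is the span of the zonal polynomials of degree at most 1, and
`Pol_k = span{fg : f ∈ Pol_1, g ∈ Pol_{k-1}}` for `k ≥ 2`. -/
def PolRec (X : Finset V) : ℕ → Submodule ℝ (X → ℝ)
  | 0 => Submodule.span ℝ {f | ∃ c : ℝ, f = fun _ => c}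
  | 1 => Pol1 X
  | (k + 2) => Submodule.span ℝ
      {h | ∃ f ∈ Pol1 X, ∃ g ∈ PolRec X (k + 1), h = f * g}

/-! Restricted to `X`, the zonal polynomials of degree at most `k` span exactly the restrictions
of the polynomials of degree at most `k` in the coordinates. One inclusion is the multinomial
expansion of `⟪a, x⟫ ^ i`. For the other, let `A` be the matrix of the degree-`i` coordinate
monomials evaluated on `X`: then `Aᵀ A` is the kernel `(x, y) ↦ ⟪x, y⟫ ^ i`, and over an ordered
field `Aᵀ A` and `Aᵀ` have the same column space. Coordinate polynomials are closed under
multiplication, so `Pol_{k+1} = Pol_1 · Pol_k`, and the theorem follows by induction on `k`. -/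

open Matrix

theorem Matrix.range_mulVecLin_transpose_mul_self {m n R : Type*} [Fintype m] [Fintype n]
    [Field R] [LinearOrder R] [IsStrictOrderedRing R] (A : Matrix m n R) :
    LinearMap.range (Aᵀ * A).mulVecLin = LinearMap.range Aᵀ.mulVecLin := by
  refine Submodule.eq_of_le_of_finrank_eq ?_ ?_
  · rw [Matrix.mulVecLin_mul]
    exact LinearMap.range_comp_le_range _ _
  · exact A.rank_transpose_mul_self.trans A.rank_transpose.symm

section Coordinates

variable {ι : Type*} (X : Finset (EuclideanSpace ℝ ι))

def coordMonomial {i : ℕ} (s : Fin i → ι) : X → ℝ := fun x => ∏ t, x.1 (s t)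

def PolCoord (k : ℕ) : Submodule ℝ (X → ℝ) :=
  Submodule.span ℝ {f | ∃ i ≤ k, ∃ s : Fin i → ι, f = coordMonomial X s}

theorem coordMonomial_mul {i j : ℕ} (s : Fin i → ι) (s' : Fin j → ι) :
    coordMonomial X s * coordMonomial X s' = coordMonomial X (Fin.append s s') := by
  funext x
  simp [coordMonomial, Fin.prod_univ_add]

theorem polCoord_mul_le (i j : ℕ) : PolCoord X i * PolCoord X j ≤ PolCoord X (i + j) := by
  rw [PolCoord, PolCoord, Submodule.span_mul_span]
  refine Submodule.span_mono ?_
  rintro _ ⟨_, ⟨u, hu, s, rfl⟩, _, ⟨v, hv, s', rfl⟩, rfl⟩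
  exact ⟨u + v, by omega, Fin.append s s', coordMonomial_mul X s s'⟩

theorem one_mem_polCoord (k : ℕ) : (1 : X → ℝ) ∈ PolCoord X k :=
  Submodule.subset_span ⟨0, k.zero_le, Fin.elim0, funext fun _ => by simp [coordMonomial]⟩

variable [Fintype ι]

theorem EuclideanSpace.inner_pow_eq_sum_prod (c d : EuclideanSpace ℝ ι) (i : ℕ) :
    ⟪c, d⟫_ℝ ^ i = ∑ s : Fin i → ι, (∏ t, c (s t)) * ∏ t, d (s t) := by
  have h : ⟪c, d⟫_ℝ = ∑ j, c j * d j := by simp [PiLp.inner_apply, mul_comm]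
  rw [h, Fintype.sum_pow]
  exact Finset.sum_congr rfl fun s _ => Finset.prod_mul_distrib

theorem zonal_pow_mem_span_coordMonomial (a : EuclideanSpace ℝ ι) (i : ℕ) :
    (fun x : X => ⟪a, x.1⟫_ℝ ^ i) ∈
      Submodule.span ℝ (Set.range fun s : Fin i → ι => coordMonomial X s) := by
  have h : (fun x : X => ⟪a, x.1⟫_ℝ ^ i) =
      ∑ s : Fin i → ι, (∏ t, a (s t)) • coordMonomial X s := by
    funext x
    simp [EuclideanSpace.inner_pow_eq_sum_prod, coordMonomial]
  rw [h]
  exact Submodule.sum_mem _ fun s _ => Submodule.smul_mem _ _ (Submodule.subset_span ⟨s, rfl⟩)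

theorem span_coordMonomial_le_span_zonal_pow (i : ℕ) :
    Submodule.span ℝ (Set.range fun s : Fin i → ι => coordMonomial X s) ≤
      Submodule.span ℝ (Set.range fun c : X => fun x : X => ⟪c.1, x.1⟫_ℝ ^ i) := by
  let A : Matrix (Fin i → ι) X ℝ := Matrix.of fun s x => ∏ t, x.1 (s t)
  have hcols : (Aᵀ * A).col = fun c : X => fun x : X => ⟪c.1, x.1⟫_ℝ ^ i := by
    funext c x
    simp [A, Matrix.mul_apply, EuclideanSpace.inner_pow_eq_sum_prod, mul_comm]
  have h := A.range_mulVecLin_transpose_mul_self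
  rw [Matrix.range_mulVecLin, Matrix.range_mulVecLin, hcols] at h
  rw [h]
  rfl

theorem zonal_mem_polCoord (a : EuclideanSpace ℝ ι) {p : Polynomial ℝ} {k : ℕ}
    (hp : p.natDegree ≤ k) : (fun x : X => p.eval ⟪a, x.1⟫_ℝ) ∈ PolCoord X k := by
  have h : (fun x : X => p.eval ⟪a, x.1⟫_ℝ) =
      ∑ i ∈ Finset.range (k + 1), p.coeff i • fun x : X => ⟪a, x.1⟫_ℝ ^ i := by
    funext x
    simp [Polynomial.eval_eq_sum_range' (Nat.lt_succ_of_le hp)]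
  rw [h]
  refine Submodule.sum_mem _ fun i hi => Submodule.smul_mem _ _ ?_
  refine Submodule.span_le.mpr ?_ (zonal_pow_mem_span_coordMonomial X a i)
  rintro _ ⟨s, rfl⟩
  exact Submodule.subset_span ⟨i, Nat.lt_succ_iff.mp (Finset.mem_range.mp hi), s, rfl⟩

theorem pol_eq_polCoord (k : ℕ) : Pol X k = PolCoord X k := by
  apply le_antisymm
  · refine Submodule.span_le.mpr ?_
    rintro _ ⟨a, -, p, hp, rfl⟩
    exact zonal_mem_polCoord X a hp
  · refine Submodule.span_le.mpr ?_
    rintro _ ⟨i, hi, s, rfl⟩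
    refine Submodule.span_le.mpr ?_
      (span_coordMonomial_le_span_zonal_pow X i (Submodule.subset_span ⟨s, rfl⟩))
    rintro _ ⟨c, rfl⟩
    exact Submodule.subset_span ⟨c.1, c.2, Polynomial.X ^ i, by simpa using hi,
      funext fun x => by simp⟩

theorem pol_mul_le (i j : ℕ) : Pol X i * Pol X j ≤ Pol X (i + j) := by
  simpa only [pol_eq_polCoord] using polCoord_mul_le X i j

theorem one_mem_pol (k : ℕ) : (1 : X → ℝ) ∈ Pol X k := by
  simpa only [pol_eq_polCoord] using one_mem_polCoord X k

theorem pol_zero_eq_span_const :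
    Pol X 0 = Submodule.span ℝ {f | ∃ c : ℝ, f = fun _ => c} := by
  apply le_antisymm
  · refine Submodule.span_le.mpr ?_
    rintro _ ⟨a, -, p, hp, rfl⟩
    rw [Polynomial.eq_C_of_natDegree_le_zero hp]
    exact Submodule.subset_span ⟨p.coeff 0, funext fun x => Polynomial.eval_C⟩
  · refine Submodule.span_le.mpr ?_
    rintro _ ⟨c, rfl⟩
    have hc : (fun _ : X => c) = c • (1 : X → ℝ) := funext fun _ => (mul_one c).symm
    exact hc ▸ Submodule.smul_mem _ c (one_mem_pol X 0)

theorem pol_succ_eq_mul (k : ℕ) : Pol X (k + 1) = Pol X 1 * Pol X k := by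
  refine le_antisymm (Submodule.span_le.mpr ?_) (add_comm k 1 ▸ pol_mul_le X 1 k)
  rintro _ ⟨a, ha, p, hp, rfl⟩
  have zonal_mem {q : Polynomial ℝ} {l : ℕ} (hq : q.natDegree ≤ l) :
      (fun x : X => q.eval ⟪a, x.1⟫_ℝ) ∈ Pol X l :=
    Submodule.subset_span ⟨a, ha, q, hq, rfl⟩
  have hsplit : (fun x : X => p.eval ⟪a, x.1⟫_ℝ) =
      (fun x : X => (Polynomial.X : Polynomial ℝ).eval ⟪a, x.1⟫_ℝ) *
        (fun x : X => p.divX.eval ⟪a, x.1⟫_ℝ) +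
      (fun x : X => (Polynomial.C (p.coeff 0)).eval ⟪a, x.1⟫_ℝ) * 1 := by
    funext x
    conv_lhs => rw [← p.divX_mul_X_add]
    simp only [Pi.add_apply, Pi.mul_apply, Pi.one_apply, Polynomial.eval_add,
      Polynomial.eval_mul, Polynomial.eval_X, Polynomial.eval_C]
    ring
  rw [hsplit]
  refine Submodule.add_mem _ (Submodule.mul_mem_mul (zonal_mem Polynomial.natDegree_X_le) ?_)
    (Submodule.mul_mem_mul (zonal_mem (by simp)) (one_mem_pol X k))
  refine zonal_mem ?_
  have := p.natDegree_divX_eq_natDegree_tsub_one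
  omega

end Coordinates

theorem polRec_add_two (X : Finset V) (k : ℕ) :
    PolRec X (k + 2) = Pol X 1 * PolRec X (k + 1) := by
  rw [PolRec, Submodule.mul_def]
  congr 1
  ext h
  simp only [Set.mem_mul, SetLike.mem_coe, eq_comm]
  rfl

theorem statement_1 {m : ℕ} (X : Finset (EuclideanSpace ℝ (Fin m))) (k : ℕ) :
    PolRec X k = Pol X k :=
  match k with
  | 0 => (pol_zero_eq_span_const X).symm
  | 1 => rfl
  | k + 2 => by rw [polRec_add_two, statement_1 X (k + 1), ← pol_succ_eq_mul]

end
end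

section
/- Let X be a finite s-distance set in √m S^{m-1}, i.e., |{x·y : x,y ∈ X, x ≠ y}| = s. Then the space C(X) of all real-valued functions on X equals Pol_s(X), the span of zonal polynomials ζ_a(p) with a ∈ X and deg p ≤ s. -/
open scoped InnerProductSpace Classical

noncomputable section

variable {V : Type*} [NormedAddCommGroup V] [InnerProductSpace ℝ V]

theorem statement_2 {m : ℕ} (X : Finset (EuclideanSpace ℝ (Fin m))) (hne : X.Nonempty)
    (hsph : onSphere (m : ℝ) X) (s : ℕ) (hs : (Aset X).card = s) :
    Pol X s = ⊤ := by
  classical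
  -- m is not in Aset X
  have hmA : (m : ℝ) ∉ Aset X := by
    intro hmem
    simp only [Aset, Finset.mem_image, Finset.mem_filter, Finset.mem_product] at hmem
    obtain ⟨⟨x, y⟩, ⟨⟨hx, hy⟩, hxy⟩, hinner⟩ := hmem
    dsimp only at hinner hxy hx hy
    apply hxy
    have h0 : ⟪x - y, x - y⟫_ℝ = 0 := by
      have hinner' : ⟪y, x⟫_ℝ = (m : ℝ) := by rw [real_inner_comm]; exact hinner
      rw [inner_sub_sub_self, hsph x hx, hsph y hy, hinner', hinner]
      ring
    exact sub_eq_zero.mp (inner_self_eq_zero.mp h0)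
  set p : Polynomial ℝ := ∏ α ∈ Aset X, (Polynomial.X - Polynomial.C α) with hp
  have hdeg : p.natDegree = s := by
    rw [hp, Polynomial.natDegree_prod]
    · simp [hs]
    · intro α _
      exact Polynomial.X_sub_C_ne_zero α
  have hevalm : p.eval (m : ℝ) ≠ 0 := by
    rw [hp, Polynomial.eval_prod]
    apply Finset.prod_ne_zero_iff.mpr
    intro α hα
    simp only [Polynomial.eval_sub, Polynomial.eval_X, Polynomial.eval_C]
    intro h
    exact hmA (by rwa [sub_eq_zero.mp h])
  have hevalA : ∀ α ∈ Aset X, p.eval α = 0 := by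
    intro α hα
    rw [hp, Polynomial.eval_prod]
    exact Finset.prod_eq_zero hα (by simp)
  -- the delta-like functions
  have hmem : ∀ y : X, (fun x : X => p.eval ⟪(y : EuclideanSpace ℝ (Fin m)), x.1⟫_ℝ) ∈ Pol X s :=
    fun y => Submodule.subset_span ⟨y.1, y.2, p, le_of_eq hdeg, rfl⟩
  rw [eq_top_iff]
  intro g _
  have key : g = ∑ y : X, (g y / p.eval (m : ℝ)) •
      (fun x : X => p.eval ⟪(y : EuclideanSpace ℝ (Fin m)), x.1⟫_ℝ) := by
    funext x
    rw [Finset.sum_apply]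
    rw [Finset.sum_eq_single x]
    · simp only [Pi.smul_apply, smul_eq_mul]
      rw [hsph x.1 x.2, div_mul_cancel₀ _ hevalm]
    · intro y _ hyx
      have hA : ⟪(y : EuclideanSpace ℝ (Fin m)), x.1⟫_ℝ ∈ Aset X := by
        simp only [Aset, Finset.mem_image, Finset.mem_filter, Finset.mem_product]
        exact ⟨(y.1, x.1), ⟨⟨y.2, x.2⟩, fun h => hyx (Subtype.ext h)⟩, rfl⟩
      simp only [Pi.smul_apply, smul_eq_mul]
      rw [hevalA _ hA, mul_zero]
    · intro h
      exact absurd (Finset.mem_univ x) h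
  rw [key]
  exact Submodule.sum_mem _ fun y _ => Submodule.smul_mem _ _ (hmem y)

end
end

section
/- Let X be a spherical 2-design of size n in √m S^{m-1} which is an s-distance set, and let q_0, …, q_s be the predegree polynomials of X. Then ∑_{i=0}^s q_i(t) = n · ∏_{α ∈ A(X)} (t - α)/(m - α) as polynomials modulo Z*(t) = ∏_{α ∈ A'(X)}(t - α). -/
open scoped InnerProductSpace Classical

noncomputable section

variable {V : Type*} [NormedAddCommGroup V] [InnerProductSpace ℝ V]

/-!
Both `∑ qᵢ` and `G = n ∏_{α ∈ A(X)} (t - α)/(m - α)` represent evaluation at `m` on the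
polynomials of degree `≤ s`: the former by the orthogonality relations of the `qᵢ`, the latter
because `G` is `n` times the Lagrange basis polynomial of the nodes `A'(X)` at `m` and `κ_m = n`
on the sphere. Since `|A'(X)| = s + 1`, every Lagrange basis polynomial `L_β` of these nodes has
degree `s`, so the difference `D` satisfies `0 = ⟨D, L_β⟩ = κ_β D(β) / n²`, i.e. `D` vanishes
on `A'(X)`.
-/

open Polynomial

def Polynomial.Sequence.ofIic {R : Type*} [Semiring R] [Nontrivial R] (q : ℕ → R[X]) (s : ℕ)
    (hq : ∀ k ≤ s, (q k).degree = k) : Sequence R where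
  elems' i := if i ≤ s then q i else X ^ i
  degree_eq' i := by
    split_ifs with h
    exacts [hq i h, degree_X_pow i]

theorem Polynomial.span_image_Iic_eq_degreeLE {K : Type*} [Field K] {q : ℕ → K[X]} {s : ℕ}
    (hq : ∀ k ≤ s, (q k).degree = k) :
    Submodule.span K (q '' Set.Iic s) = degreeLE K s := by
  have hseq : (Sequence.ofIic q s hq : ℕ → K[X]) '' Set.Iic s = q '' Set.Iic s :=
    Set.image_congr fun i hi => if_pos hi
  rw [← hseq]
  refine (Sequence.ofIic q s hq).span_degreeLE fun i _ => ?_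
  exact (leadingCoeff_ne_zero.2 ((Sequence.ofIic q s hq).ne_zero i)).isUnit

def pInnBilin (m : ℝ) (X : Finset V) : LinearMap.BilinForm ℝ ℝ[X] :=
  LinearMap.mk₂ ℝ (pInn m X)
    (fun p p' q => by simp only [pInn, eval_add, add_mul, mul_add, Finset.sum_add_distrib])
    (fun c p q => by
      simp only [pInn, eval_smul, smul_eq_mul, Finset.mul_sum]
      exact Finset.sum_congr rfl fun _ _ => by ring)
    (fun p q q' => by simp only [pInn, eval_add, mul_add, Finset.sum_add_distrib])
    (fun c p q => by
      simp only [pInn, eval_smul, smul_eq_mul, Finset.mul_sum]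
      exact Finset.sum_congr rfl fun _ _ => by ring)

theorem pInnBilin_apply (m : ℝ) (X : Finset V) (p q : ℝ[X]) :
    pInnBilin m X p q = pInn m X p q := rfl

theorem pInn_comm (m : ℝ) (X : Finset V) (p q : ℝ[X]) : pInn m X p q = pInn m X q p := by
  simp only [pInn, mul_comm (eval _ p)]

theorem pInn_lagrangeBasis {m β : ℝ} {X : Finset V} (hβ : β ∈ Aset' m X) (D : ℝ[X]) :
    pInn m X D (Lagrange.basis (Aset' m X) id β) = kappa X β / (X.card : ℝ) ^ 2 * D.eval β := by
  rw [pInn, Finset.sum_eq_single β (fun α hα hαβ => ?_) (absurd hβ)]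
  · have h1 := Lagrange.eval_basis_self (v := id) (Set.injOn_id _) hβ
    rw [id] at h1
    rw [h1]
    ring
  · have h0 := Lagrange.eval_basis_of_ne (v := id) hαβ.symm hα
    rw [id] at h0
    rw [h0, mul_zero, mul_zero]

section Sphere

variable {m : ℝ} {X : Finset V}

theorem eq_of_inner_eq_of_onSphere (hX : onSphere m X) {x y : V} (hx : x ∈ X) (hy : y ∈ X)
    (hxy : ⟪x, y⟫_ℝ = m) : x = y := by
  have h0 : ⟪x - y, x - y⟫_ℝ = 0 := by
    rw [real_inner_sub_sub_self, hX x hx, hX y hy, hxy]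
    ring
  exact sub_eq_zero.1 (inner_self_eq_zero.1 h0)

theorem notMem_Aset_of_onSphere (hX : onSphere m X) : m ∉ Aset X := by
  simp only [Aset, Finset.mem_image, Finset.mem_filter, Finset.mem_product, not_exists, not_and]
  rintro ⟨x, y⟩ ⟨⟨hx, hy⟩, hxy⟩ hm
  exact hxy (eq_of_inner_eq_of_onSphere hX hx hy hm)

theorem kappa_eq_card_of_onSphere (hX : onSphere m X) : kappa X m = X.card := by
  have hdiag : (X ×ˢ X).filter (fun p => ⟪p.1, p.2⟫_ℝ = m) = X.image fun x => (x, x) := by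
    ext ⟨x, y⟩
    simp only [Finset.mem_filter, Finset.mem_product, Finset.mem_image, Prod.mk.injEq]
    constructor
    · rintro ⟨⟨hx, hy⟩, hm⟩
      exact ⟨x, hx, rfl, eq_of_inner_eq_of_onSphere hX hx hy hm⟩
    · rintro ⟨x, hx, rfl, rfl⟩
      exact ⟨⟨hx, hx⟩, hX x hx⟩
  rw [kappa, hdiag, Finset.card_image_of_injective _ fun x y h => congrArg Prod.fst h]

theorem kappa_pos_of_mem_Aset {α : ℝ} (hα : α ∈ Aset X) : 0 < kappa X α := by
  simp only [Aset, Finset.mem_image, Finset.mem_filter] at hα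
  obtain ⟨p, ⟨hp, _⟩, hpα⟩ := hα
  exact Finset.card_pos.2 ⟨p, Finset.mem_filter.2 ⟨hp, hpα⟩⟩

theorem kappa_pos_of_mem_Aset' (hX : onSphere m X) (hne : X.Nonempty) {α : ℝ}
    (hα : α ∈ Aset' m X) : 0 < kappa X α := by
  rcases Finset.mem_insert.1 hα with rfl | hα
  · rw [kappa_eq_card_of_onSphere hX]
    exact hne.card_pos
  · exact kappa_pos_of_mem_Aset hα

theorem pInn_C_card_mul_lagrangeBasis (hX : onSphere m X) (hne : X.Nonempty) (p : ℝ[X]) :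
    pInn m X (C (X.card : ℝ) * Lagrange.basis (Aset' m X) id m) p = p.eval m := by
  have hn : (X.card : ℝ) ≠ 0 := Nat.cast_ne_zero.2 hne.card_pos.ne'
  rw [← smul_eq_C_mul, ← pInnBilin_apply, LinearMap.map_smul₂, pInnBilin_apply, pInn_comm,
    pInn_lagrangeBasis (Finset.mem_insert_self m _), kappa_eq_card_of_onSphere hX, smul_eq_mul]
  field_simp

end Sphere

theorem eval_eq_zero_of_pInn_degreeLT_eq_zero {m : ℝ} {X : Finset V}
    (hκ : ∀ α ∈ Aset' m X, 0 < kappa X α) {D : ℝ[X]}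
    (hD : ∀ p ∈ degreeLT ℝ (Aset' m X).card, pInn m X D p = 0) {β : ℝ} (hβ : β ∈ Aset' m X) :
    D.eval β = 0 := by
  have hL : Lagrange.basis (Aset' m X) id β ∈ degreeLT ℝ (Aset' m X).card := by
    rw [mem_degreeLT]
    refine degree_le_natDegree.trans_lt ?_
    rw [Lagrange.natDegree_basis (Set.injOn_id _) hβ, Nat.cast_lt]
    exact Nat.sub_lt (Finset.card_pos.2 ⟨β, hβ⟩) one_pos
  have hX : X.Nonempty := by
    obtain ⟨p, hp⟩ := Finset.card_pos.1 (hκ β hβ)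
    exact ⟨p.1, (Finset.mem_product.1 (Finset.mem_filter.1 hp).1).1⟩
  have hw : (kappa X β : ℝ) / (X.card : ℝ) ^ 2 ≠ 0 :=
    div_ne_zero (Nat.cast_ne_zero.2 (hκ β hβ).ne')
      (pow_ne_zero 2 (Nat.cast_ne_zero.2 hX.card_pos.ne'))
  have h0 := hD _ hL
  rw [pInn_lagrangeBasis hβ] at h0
  exact (mul_eq_zero.1 h0).resolve_left hw

theorem pInn_sum_eq_eval_of_isPredegree {m : ℝ} {X : Finset V} {s : ℕ} {q : ℕ → ℝ[X]}
    (hq : IsPredegree m X s q) {k : ℕ} (hk : k ≤ s) :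
    pInn m X (∑ i ∈ Finset.range (s + 1), q i) (q k) = (q k).eval m := by
  rw [← pInnBilin_apply, LinearMap.map_sum₂]
  simp only [pInnBilin_apply]
  rw [Finset.sum_congr rfl fun i hi => hq.2 i (Nat.lt_succ_iff.1 (Finset.mem_range.1 hi)) k hk,
    Finset.sum_ite_eq' (Finset.range (s + 1)) k, if_pos (Finset.mem_range.2 (Nat.lt_succ_of_le hk))]

theorem statement_6_general {m : ℕ} (X : Finset (EuclideanSpace ℝ (Fin m))) (hne : X.Nonempty)
    (hsph : onSphere (m : ℝ) X) (s : ℕ) (hs : (Aset X).card = s)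
    (q : ℕ → Polynomial ℝ) (hq : IsPredegree (m : ℝ) X s q) :
    (∏ α ∈ Aset' (m : ℝ) X, (Polynomial.X - Polynomial.C α)) ∣
      ((∑ i ∈ Finset.range (s + 1), q i) -
        Polynomial.C (X.card : ℝ) *
          ∏ α ∈ Aset X, Polynomial.C (((m : ℝ) - α)⁻¹) * (Polynomial.X - Polynomial.C α)) := by
  have hmA := notMem_Aset_of_onSphere hsph
  have hcard : (Aset' (m : ℝ) X).card = s + 1 := by
    rw [Aset', Finset.card_insert_of_notMem hmA, hs]
  have hbasis : ∏ α ∈ Aset X, C (((m : ℝ) - α)⁻¹) * (Polynomial.X - C α)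
      = Lagrange.basis (Aset' (m : ℝ) X) id (m : ℝ) := by
    rw [Lagrange.basis, Aset', Finset.erase_insert hmA]
    rfl
  rw [hbasis]
  set D := (∑ i ∈ Finset.range (s + 1), q i) -
    C (X.card : ℝ) * Lagrange.basis (Aset' (m : ℝ) X) id m
  have horth : ∀ k ≤ s, pInn m X D (q k) = 0 := fun k hk => by
    rw [← pInnBilin_apply, LinearMap.map_sub₂, pInnBilin_apply, pInnBilin_apply,
      pInn_sum_eq_eval_of_isPredegree hq hk, pInn_C_card_mul_lagrangeBasis hsph hne, sub_self]
  have hdeg : ∀ p ∈ degreeLT ℝ (Aset' (m : ℝ) X).card, pInn m X D p = 0 := by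
    rw [hcard, degreeLT_succ_eq_degreeLE, ← span_image_Iic_eq_degreeLE fun k hk =>
      (degree_eq_iff_natDegree_eq (hq.1 k hk).2).2 (hq.1 k hk).1]
    intro p hp
    refine Submodule.span_le (p := LinearMap.ker (pInnBilin m X D)).2 ?_ hp
    rintro _ ⟨k, hk, rfl⟩
    exact horth k hk
  exact Finset.prod_dvd_of_coprime ((pairwise_coprime_X_sub_C Function.injective_id).set_pairwise _)
    fun β hβ => dvd_iff_isRoot.2 <|
      eval_eq_zero_of_pInn_degreeLT_eq_zero (fun α => kappa_pos_of_mem_Aset' hsph hne) hdeg hβ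

theorem statement_6 {m : ℕ} (X : Finset (EuclideanSpace ℝ (Fin m))) (hne : X.Nonempty)
    (hsph : onSphere (m : ℝ) X) (hdes : IsTwoDesign X) (s : ℕ) (hs : (Aset X).card = s)
    (q : ℕ → Polynomial ℝ) (hq : IsPredegree (m : ℝ) X s q) :
    (∏ α ∈ Aset' (m : ℝ) X, (Polynomial.X - Polynomial.C α)) ∣
      ((∑ i ∈ Finset.range (s + 1), q i) -
        Polynomial.C (X.card : ℝ) *
          ∏ α ∈ Aset X, Polynomial.C (((m : ℝ) - α)⁻¹) * (Polynomial.X - Polynomial.C α)) :=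
  statement_6_general X hne hsph s hs q hq

end
end

section
/- Let X be a spherical 2-design of size n in √m S^{m-1} which is an s-distance set of degree S = s, with normalized Gram matrix G, projection matrices {F_i}_{i=0}^s, and predegree polynomials {q_i}. If (1/n)q_i((nG)^∘) = F_i for all i ∈ {0,…,s}, then the relations R_α = {(x,y) : x·y = α} for α ∈ A'(X) form a symmetric association scheme on X which is Q-polynomial with respect to the ordering of idempotents {F_i}_{i=0}^s. -/
open scoped InnerProductSpace Classical

noncomputable section

variable {V : Type*} [NormedAddCommGroup V] [InnerProductSpace ℝ V]

/-!
The harmonic spaces are mutually orthogonal and `Harm_0 ⊕ ⋯ ⊕ Harm_k = Pol_k`, so the `F_i` are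
orthogonal idempotents and `∑_{i ≤ k} F_i` is the identity on `Pol_k`. On the sphere `x·y = m`
only for `x = y`, so Lagrange interpolation on `A'(X)` gives `Pol_s = C(X)` (hence `∑ F_i = I`)
and writes each `A_α` as `p(nG)` with `deg p ≤ s`. As `q_0, …, q_s` span the polynomials of
degree `≤ s`, these lie in the span of the `F_i = q_i(nG)/n`, which in turn lie in the span of
the `A_α`. So both spans agree, and the span of orthogonal idempotents is closed under
multiplication. Finally `q_1` is linear, so `q_i = (q_i ∘ q_1⁻¹) ∘ q_1` with
`deg (q_i ∘ q_1⁻¹) = i`.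
-/

open Finset Submodule Matrix

section Perp

variable {α : Type*} {X : Finset α}

lemma inn_comm (f g : X → ℝ) : inn X f g = inn X g f := by
  simp only [inn, mul_comm (f _)]

lemma mem_perp_iff {W : Submodule ℝ (X → ℝ)} {f : X → ℝ} :
    f ∈ perp X W ↔ ∀ g ∈ W, inn X g f = 0 := by
  simp only [perp, mem_iInf, LinearMap.mem_ker]
  rfl

lemma perp_anti {W W' : Submodule ℝ (X → ℝ)} (h : W ≤ W') : perp X W' ≤ perp X W :=
  fun _ hf => mem_perp_iff.2 fun g hg => mem_perp_iff.1 hf g (h hg)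

lemma le_perp_comm {W W' : Submodule ℝ (X → ℝ)} (h : W ≤ perp X W') : W' ≤ perp X W :=
  fun f hf => mem_perp_iff.2 fun g hg => by rw [inn_comm]; exact mem_perp_iff.1 (h hg) f hf

/-- `perp` is the orthogonal complement for the dot product (of which `inn` is a multiple), so
this is the projection theorem in `EuclideanSpace ℝ X`. -/
lemma exists_add_mem_perp (W : Submodule ℝ (X → ℝ)) (f : X → ℝ) :
    ∃ w ∈ W, ∃ p ∈ perp X W, f = w + p := by
  let e : (X → ℝ) ≃ₗ[ℝ] EuclideanSpace ℝ X := (WithLp.linearEquiv 2 ℝ (X → ℝ)).symm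
  obtain ⟨u, ⟨w, hw, rfl⟩, v, hv, huv⟩ := (W.map e.toLinearMap).exists_add_mem_mem_orthogonal (e f)
  refine ⟨w, hw, e.symm v, mem_perp_iff.2 fun g hg => ?_, e.injective ?_⟩
  · have h0 : ⟪e g, v⟫_ℝ = 0 := (mem_orthogonal _ v).1 hv (e g) ⟨g, hg, rfl⟩
    simp only [PiLp.inner_apply, RCLike.inner_apply, conj_trivial] at h0
    simp only [inn, mul_comm (g _)]
    simpa [e] using Or.inr h0
  · simpa [e] using huv

end Perp

namespace IsProjOnto

variable {α : Type*} {X : Finset α} {W W' : Submodule ℝ (X → ℝ)} {F F' : Matrix X X ℝ}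

lemma mul_self (hF : IsProjOnto X W F) : F * F = F :=
  ext_iff_mulVec.2 fun v => by rw [← mulVec_mulVec, hF.2.1 _ (hF.1 v)]

lemma mul_eq_zero (hF : IsProjOnto X W F) (hF' : IsProjOnto X W' F') (h : W' ≤ perp X W) :
    F * F' = 0 :=
  ext_iff_mulVec.2 fun v => by
    rw [← mulVec_mulVec, hF.2.2 _ (h (hF'.1 v)), zero_mulVec]

lemma mulVec_eq_zero (hF : IsProjOnto X W F) {W₀ : Submodule ℝ (X → ℝ)} (h : W ≤ W₀)
    {f : X → ℝ} (hf : f ∈ perp X W₀) : F *ᵥ f = 0 :=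
  hF.2.2 f (perp_anti h hf)

end IsProjOnto

section Harm

variable {X : Finset V}

lemma pol_mono : Monotone (Pol X) := fun _ _ hkl =>
  span_mono fun _ ⟨a, ha, p, hp, hf⟩ => ⟨a, ha, p, hp.trans hkl, hf⟩

lemma harm_le_pol : ∀ k, Harm X k ≤ Pol X k
  | 0 => le_rfl
  | _ + 1 => inf_le_left

lemma harm_succ_le_perp_pol (k : ℕ) : Harm X (k + 1) ≤ perp X (Pol X k) := inf_le_right

lemma pol_le_perp_harm {i j : ℕ} (hij : i < j) : Pol X i ≤ perp X (Harm X j) := by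
  obtain ⟨k, rfl⟩ := Nat.exists_eq_add_of_lt hij
  exact le_perp_comm ((harm_succ_le_perp_pol _).trans (perp_anti (pol_mono (by omega))))

lemma harm_le_perp_harm {i j : ℕ} (hij : i ≠ j) : Harm X i ≤ perp X (Harm X j) := by
  rcases hij.lt_or_gt with hij | hij
  · exact (harm_le_pol i).trans (pol_le_perp_harm hij)
  · exact le_perp_comm ((harm_le_pol j).trans (pol_le_perp_harm hij))

variable {F : ℕ → Matrix X X ℝ}

lemma harmProj_mul (hF : ∀ i, IsProjOnto X (Harm X i) (F i)) (i j : ℕ) :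
    F i * F j = if i = j then F i else 0 := by
  split_ifs with hij
  · subst hij; exact (hF i).mul_self
  · exact (hF i).mul_eq_zero (hF j) (harm_le_perp_harm (Ne.symm hij))

lemma sum_harmProj_mulVec (hF : ∀ i, IsProjOnto X (Harm X i) (F i)) {k : ℕ} {f : X → ℝ}
    (hf : f ∈ Pol X k) :
    (∑ i ∈ range (k + 1), F i) *ᵥ f = f := by
  induction k generalizing f with
  | zero => simpa using (hF 0).2.1 f hf
  | succ k ih =>
    obtain ⟨w, hw, p, hp, rfl⟩ := exists_add_mem_perp (Pol X k) f
    have hpHarm : p ∈ Harm X (k + 1) := by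
      refine mem_inf.2 ⟨?_, hp⟩
      simpa using sub_mem hf (pol_mono k.le_succ hw)
    have hFw : F (k + 1) *ᵥ w = 0 := (hF (k + 1)).2.2 w (pol_le_perp_harm k.lt_succ_self hw)
    have hFp : ∀ i ∈ range (k + 1), F i *ᵥ p = 0 := fun i hi =>
      (hF i).mulVec_eq_zero ((harm_le_pol i).trans (pol_mono (Nat.lt_succ_iff.1 (mem_range.1 hi))))
        hp
    rw [sum_range_succ, add_mulVec, mulVec_add, mulVec_add, ih hw, sum_mulVec,
      sum_eq_zero hFp, hFw, (hF (k + 1)).2.1 p hpHarm]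
    abel

lemma sum_harmProj_eq_one (hF : ∀ i, IsProjOnto X (Harm X i) (F i)) {k : ℕ}
    (hk : Pol X k = ⊤) :
    ∑ i ∈ range (k + 1), F i = 1 :=
  ext_iff_mulVec.2 fun f => by rw [one_mulVec]; exact sum_harmProj_mulVec hF (hk ▸ mem_top)

end Harm

lemma Lagrange.eval_basis_id {K : Type*} [Field K] [DecidableEq K] {s : Finset K} {a t : K}
    (ha : a ∈ s) (ht : t ∈ s) : (Lagrange.basis s id a).eval t = if t = a then 1 else 0 := by
  split_ifs with hta
  · subst hta; exact Lagrange.eval_basis_self (Set.injOn_id _) ha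
  · exact Lagrange.eval_basis_of_ne (v := id) (Ne.symm hta) ht

lemma Lagrange.natDegree_basis_id {K : Type*} [Field K] [DecidableEq K] {s : Finset K} {a : K}
    (ha : a ∈ s) : (Lagrange.basis s id a).natDegree = s.card - 1 :=
  Lagrange.natDegree_basis (Set.injOn_id _) ha

namespace onSphere

variable {X : Finset V} {μ : ℝ}

lemma notMem_Aset (hX : onSphere μ X) : μ ∉ Aset X := by
  simp only [Aset, mem_image, mem_filter, mem_product, Prod.exists, not_exists, not_and]
  rintro x y ⟨⟨hx, hy⟩, hxy⟩ hμ
  refine hxy (sub_eq_zero.1 (inner_self_eq_zero (𝕜 := ℝ).1 ?_))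
  rw [inner_sub_sub_self, hX x hx, hX y hy, hμ, real_inner_comm, hμ]
  ring

lemma card_Aset' (hX : onSphere μ X) : (Aset' μ X).card = (Aset X).card + 1 :=
  card_insert_of_notMem hX.notMem_Aset

lemma inner_mem_Aset (x y : X) (hxy : x ≠ y) : ⟪(x : V), (y : V)⟫_ℝ ∈ Aset X :=
  mem_image.2 ⟨((x : V), (y : V)),
    mem_filter.2 ⟨mem_product.2 ⟨x.2, y.2⟩, fun h => hxy (Subtype.ext h)⟩, rfl⟩

lemma inner_mem_Aset' (hX : onSphere μ X) (x y : X) : ⟪(x : V), (y : V)⟫_ℝ ∈ Aset' μ X := by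
  by_cases hxy : x = y
  · rw [hxy, hX y y.2]
    exact mem_insert_self _ _
  · exact mem_insert_of_mem (inner_mem_Aset x y hxy)

lemma inner_eq_iff (hX : onSphere μ X) (x y : X) : ⟪(x : V), (y : V)⟫_ℝ = μ ↔ x = y := by
  refine ⟨fun h => by_contra fun hxy => hX.notMem_Aset (h ▸ inner_mem_Aset x y hxy), ?_⟩
  rintro rfl
  exact hX x x.2

lemma pol_card_Aset_eq_top (hX : onSphere μ X) : Pol X (Aset X).card = ⊤ := by
  have hμ : μ ∈ Aset' μ X := mem_insert_self _ _
  have hind : ∀ a : X, (fun x => if a = x then (1 : ℝ) else 0) ∈ Pol X (Aset X).card :=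
    fun a => by
    refine subset_span ⟨a, a.2, Lagrange.basis (Aset' μ X) id μ, ?_, funext fun x => ?_⟩
    · rw [Lagrange.natDegree_basis_id hμ, hX.card_Aset', Nat.add_sub_cancel]
    · simp only [Lagrange.eval_basis_id hμ (hX.inner_mem_Aset' a x), hX.inner_eq_iff]
  refine eq_top_iff.2 fun f _ => ?_
  rw [pi_eq_sum_univ f]
  exact sum_mem fun a _ => smul_mem _ _ (hind a)

end onSphere

lemma mul_mem_span_of_forall_mul_mem {R A : Type*} [CommSemiring R] [Semiring A] [Algebra R A]
    {S : Set A} (hS : ∀ a ∈ S, ∀ b ∈ S, a * b ∈ span R S) {x y : A} (hx : x ∈ span R S)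
    (hy : y ∈ span R S) : x * y ∈ span R S := by
  have hxy := mul_mem_mul hx hy
  rw [span_mul_span] at hxy
  exact span_le.2 (Set.mul_subset_iff.2 hS) hxy

namespace Polynomial

variable {K : Type*} [Field K]

lemma span_image_Iic_eq_degreeLE_s9 {q : ℕ → K[X]} {s : ℕ}
    (hq : ∀ k ≤ s, (q k).natDegree = k ∧ q k ≠ 0) : span K (q '' Set.Iic s) = degreeLE K s := by
  let S : Sequence K :=
    { elems' := fun i => if i ≤ s then q i else X ^ i
      degree_eq' := fun i => by
        split_ifs with hi
        · rw [degree_eq_natDegree (hq i hi).2, (hq i hi).1]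
        · exact degree_X_pow i }
  have hSq : ∀ i ≤ s, S i = q i := fun i hi => if_pos hi
  rw [← Set.image_congr (s := Set.Iic s) fun i hi => hSq i hi]
  exact S.span_degreeLE fun i hi => by
    rw [hSq i hi]; exact isUnit_iff_ne_zero.2 (leadingCoeff_ne_zero.2 (hq i hi).2)

lemma exists_natDegree_eq_eval_eval_eq (p : K[X]) {r : K[X]} (hr : r.natDegree = 1) :
    ∃ v : K[X], v.natDegree = p.natDegree ∧ ∀ t, v.eval (r.eval t) = p.eval t := by
  obtain ⟨a, ha, b, rfl⟩ := natDegree_eq_one.1 hr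
  refine ⟨p.comp (C a⁻¹ * (X - C b)), ?_, fun t => ?_⟩
  · rw [natDegree_comp, natDegree_C_mul (inv_ne_zero ha), natDegree_X_sub_C, mul_one]
  · simp [ha]

end Polynomial

/-- The matrix `(p(x·y))_{x,y}`, that is, `p` applied entrywise to `nG`. -/
def zonalMatrix (X : Finset V) : Polynomial ℝ →ₗ[ℝ] Matrix X X ℝ where
  toFun p := Matrix.of fun x y => p.eval ⟪(x : V), (y : V)⟫_ℝ
  map_add' p q := by ext; simp
  map_smul' c p := by ext; simp

@[simp]
lemma zonalMatrix_apply (X : Finset V) (p : Polynomial ℝ) (x y : X) :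
    zonalMatrix X p x y = p.eval ⟪(x : V), (y : V)⟫_ℝ := rfl

namespace onSphere

variable {X : Finset V} {μ : ℝ}

lemma zonalMatrix_eq_sum (hX : onSphere μ X) (p : Polynomial ℝ) :
    zonalMatrix X p = ∑ α ∈ Aset' μ X, p.eval α • relMat X α := by
  ext x y
  simp [relMat, Matrix.sum_apply, hX.inner_mem_Aset' x y]

lemma zonalMatrix_mem_span_relMat (hX : onSphere μ X) (p : Polynomial ℝ) :
    zonalMatrix X p ∈ span ℝ (relMat X '' (Aset' μ X : Set ℝ)) := by
  rw [hX.zonalMatrix_eq_sum]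
  exact sum_mem fun α hα => smul_mem _ _ (subset_span ⟨α, hα, rfl⟩)

lemma relMat_mem_map_degreeLE (hX : onSphere μ X) {α : ℝ} (hα : α ∈ Aset' μ X) :
    relMat X α ∈ (Polynomial.degreeLE ℝ (Aset X).card).map (zonalMatrix X) := by
  refine ⟨Lagrange.basis (Aset' μ X) id α, ?_, ?_⟩
  · rw [SetLike.mem_coe, Polynomial.mem_degreeLE, ← Polynomial.natDegree_le_iff_degree_le,
      Lagrange.natDegree_basis_id hα, hX.card_Aset', Nat.add_sub_cancel]
  · ext x y
    simp [relMat, Lagrange.eval_basis_id hα (hX.inner_mem_Aset' x y)]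

end onSphere

lemma cast_card_ne_zero {α : Type*} {X : Finset α} (x : X) : (X.card : ℝ) ≠ 0 :=
  Nat.cast_ne_zero.2 (card_ne_zero_of_mem x.2)

section ZonalFamily

variable {X : Finset V}

lemma zonalMatrix_eq_card_smul {F : Matrix X X ℝ} {p : Polynomial ℝ}
    (hF : F = (1 / (X.card : ℝ)) • zonalMatrix X p) : zonalMatrix X p = (X.card : ℝ) • F := by
  ext x y
  simp [hF, cast_card_ne_zero x]

lemma onSphere.span_relMat_eq {μ : ℝ} (hX : onSphere μ X) {s : ℕ} (hs : (Aset X).card = s)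
    {q : ℕ → Polynomial ℝ} (hq : ∀ k ≤ s, (q k).natDegree = k ∧ q k ≠ 0)
    {F : ℕ → Matrix X X ℝ} (hF : ∀ i ≤ s, F i = (1 / (X.card : ℝ)) • zonalMatrix X (q i)) :
    span ℝ (relMat X '' (Aset' μ X : Set ℝ)) = span ℝ (F '' Set.Iic s) := by
  refine le_antisymm (span_le.2 ?_) (span_le.2 ?_)
  · rintro _ ⟨α, hα, rfl⟩
    have hmap := hX.relMat_mem_map_degreeLE hα
    rw [hs, ← Polynomial.span_image_Iic_eq_degreeLE_s9 hq, map_span, ← Set.image_comp] at hmap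
    refine span_le.2 ?_ hmap
    rintro _ ⟨i, hi, rfl⟩
    rw [Function.comp_apply, zonalMatrix_eq_card_smul (hF i hi)]
    exact smul_mem _ _ (subset_span ⟨i, hi, rfl⟩)
  · rintro _ ⟨i, hi, rfl⟩
    rw [hF i hi]
    exact smul_mem _ _ (hX.zonalMatrix_mem_span_relMat _)

lemma harmProj_zero_eq {F₀ : Matrix X X ℝ} (hF₀ : IsProjOnto X (Harm X 0) F₀)
    {p : Polynomial ℝ} (hp : p.natDegree = 0)
    (hF₀p : F₀ = (1 / (X.card : ℝ)) • zonalMatrix X p) :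
    F₀ = Matrix.of fun _ _ => 1 / (X.card : ℝ) := by
  obtain ⟨c, rfl⟩ : ∃ c, p = Polynomial.C c := ⟨_, Polynomial.eq_C_of_natDegree_eq_zero hp⟩
  ext x y
  have hn := cast_card_ne_zero x
  have hone : (fun _ => 1) ∈ Pol X 0 :=
    subset_span ⟨x, x.2, Polynomial.C 1, (Polynomial.natDegree_C _).le, by simp⟩
  have hc : c = 1 := by
    simpa [hF₀p, mulVec, dotProduct, hn] using congrFun (hF₀.2.1 _ hone) x
  simp [hF₀p, hc]

lemma exists_natDegree_eq_eval_card_mul_one {s : ℕ} {q : ℕ → Polynomial ℝ}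
    (hq : ∀ k ≤ s, (q k).natDegree = k ∧ q k ≠ 0)
    {F : ℕ → Matrix X X ℝ} (hF : ∀ i ≤ s, F i = (1 / (X.card : ℝ)) • zonalMatrix X (q i))
    {i : ℕ} (hi : i ≤ s) : ∃ v : Polynomial ℝ, v.natDegree = i ∧
      F i = Matrix.of fun x y => (1 / (X.card : ℝ)) * v.eval ((X.card : ℝ) * F 1 x y) := by
  rcases Nat.eq_zero_or_pos i with rfl | hi₀
  · obtain ⟨c, hc⟩ : ∃ c, q 0 = Polynomial.C c :=
      ⟨_, Polynomial.eq_C_of_natDegree_eq_zero (hq 0 hi).1⟩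
    refine ⟨q 0, (hq 0 hi).1, ?_⟩
    ext x y
    simp [hF 0 hi, hc]
  · have h1 : 1 ≤ s := hi₀.trans_le hi
    obtain ⟨v, hv, hvq⟩ := Polynomial.exists_natDegree_eq_eval_eval_eq (q i) (hq 1 h1).1
    refine ⟨v, hv.trans (hq i hi).1, ?_⟩
    ext x y
    simp [hF i hi, hF 1 h1, cast_card_ne_zero x, hvq]

end ZonalFamily

theorem statement_9_general {m : ℕ} (X : Finset (EuclideanSpace ℝ (Fin m)))
    (hsph : onSphere (m : ℝ) X) (s : ℕ) (hs : (Aset X).card = s)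
    (F : ℕ → Matrix X X ℝ) (hF : ∀ i, IsProjOnto X (Harm X i) (F i))
    (q : ℕ → Polynomial ℝ) (hq : IsPredegree (m : ℝ) X s q)
    (h : ∀ i ≤ s, F i =
        Matrix.of fun x y => (1 / (X.card : ℝ)) * (q i).eval ⟪x.1, y.1⟫_ℝ) :
    CarriesQPolyScheme (m : ℝ) X s F := by
  have hFq : ∀ i ≤ s, F i = (1 / (X.card : ℝ)) • zonalMatrix X (q i) := fun i hi => by
    rw [h i hi]
    ext
    simp
  have hspan := hsph.span_relMat_eq hs hq.1 hFq
  refine ⟨fun α hα β hβ => ?_, fun i hi => ?_, fun i _ j _ => harmProj_mul hF i j,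
    sum_harmProj_eq_one hF (hs ▸ hsph.pol_card_Aset_eq_top),
    harmProj_zero_eq (hF 0) (hq.1 0 s.zero_le).1 (hFq 0 s.zero_le),
    fun i hi => exists_natDegree_eq_eval_card_mul_one hq.1 hFq hi⟩
  · have hrel : ∀ γ ∈ Aset' (m : ℝ) X, relMat X γ ∈ span ℝ (F '' Set.Iic s) := fun γ hγ =>
      hspan ▸ subset_span ⟨γ, hγ, rfl⟩
    rw [hspan]
    refine mul_mem_span_of_forall_mul_mem ?_ (hrel α hα) (hrel β hβ)
    rintro _ ⟨i, -, rfl⟩ _ ⟨j, hj, rfl⟩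
    rw [harmProj_mul hF i j]
    split_ifs with hij
    · exact subset_span ⟨i, hij ▸ hj, rfl⟩
    · exact zero_mem _
  · rw [hspan]
    exact subset_span ⟨i, hi, rfl⟩

theorem statement_9 {m : ℕ} (X : Finset (EuclideanSpace ℝ (Fin m))) (hne : X.Nonempty)
    (hsph : onSphere (m : ℝ) X) (hdes : IsTwoDesign X) (s : ℕ) (hs : (Aset X).card = s)
    (hdeg : degS X = s)
    (F : ℕ → Matrix X X ℝ) (hF : ∀ i, IsProjOnto X (Harm X i) (F i))
    (q : ℕ → Polynomial ℝ) (hq : IsPredegree (m : ℝ) X s q)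
    (h : ∀ i ≤ s, F i =
        Matrix.of fun x y => (1 / (X.card : ℝ)) * (q i).eval ⟪x.1, y.1⟫_ℝ) :
    CarriesQPolyScheme (m : ℝ) X s F :=
  statement_9_general X hsph s hs F hF q hq h

end
end
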